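/- Let u > √3 and Φ₁(z) = x_u/(1 - u²x_u²(z+1)) on [0,1], where x_u = 2/(1+√(1+8u²)). Then there exists z₁ ∈ (0,1) with Φ₁(z₁) = z₁, Φ₁(z) > z for z ∈ (0,z₁), and Φ₁(z) < z for z ∈ (z₁,1). -/

import Mathlib

noncomputable def xu (u : ℝ) : ℝ := 2 / (1 + Real.sqrt (1 + 8 * u ^ 2))

noncomputable def Phi1 (u z : ℝ) : ℝ := xu u / (1 - u ^ 2 * (xu u) ^ 2 * (z + 1))

/-!
Since `x = xu u` is the positive root of `2u²x² + x - 1 = 0`, the map `Φ₁` is the Möbius map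
`z ↦ 2x / ((1 + x) - (1 - x) z)`, and `Φ₁(z) - z` has the numerator
`(1 - z) (2x - (1 - x) z)`. Its roots are `1` and `z₁ = 2x / (1 - x)`, and `z₁ < 1` exactly when
`x < 1/3`, i.e. when `√(1 + 8u²) > 5`, i.e. when `u > √3`.
-/

lemma one_add_sqrt_pos (u : ℝ) : 0 < 1 + Real.sqrt (1 + 8 * u ^ 2) := by positivity

lemma xu_pos (u : ℝ) : 0 < xu u := div_pos two_pos (one_add_sqrt_pos u)

lemma xu_le_one (u : ℝ) : xu u ≤ 1 := by
  have : 1 ≤ Real.sqrt (1 + 8 * u ^ 2) := Real.one_le_sqrt.2 (by nlinarith)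
  rw [xu, div_le_one (one_add_sqrt_pos u)]
  linarith

lemma xu_lt_one_third {u : ℝ} (hu : Real.sqrt 3 < u) : xu u < 1 / 3 := by
  have hu2 : 3 < u ^ 2 := by
    nlinarith [Real.sq_sqrt (show (0 : ℝ) ≤ 3 by norm_num), Real.sqrt_nonneg 3]
  have : 5 < Real.sqrt (1 + 8 * u ^ 2) := Real.lt_sqrt_of_sq_lt (by linarith)
  rw [xu, div_lt_iff₀ (one_add_sqrt_pos u)]
  linarith

lemma two_mul_sq_mul_xu_sq (u : ℝ) : 2 * u ^ 2 * xu u ^ 2 = 1 - xu u := by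
  have hs := Real.sq_sqrt (show (0 : ℝ) ≤ 1 + 8 * u ^ 2 by positivity)
  have hpos := one_add_sqrt_pos u
  rw [xu]
  generalize Real.sqrt (1 + 8 * u ^ 2) = s at hs hpos
  field_simp
  linear_combination -hs

lemma Phi1_eq (u z : ℝ) : Phi1 u z = 2 * xu u / (1 + xu u - (1 - xu u) * z) := by
  have hkey : u ^ 2 * xu u ^ 2 = (1 - xu u) / 2 := by linarith [two_mul_sq_mul_xu_sq u]
  have hdenom : 1 - (1 - xu u) / 2 * (z + 1) = (1 + xu u - (1 - xu u) * z) / 2 := by ring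
  rw [Phi1, hkey, hdenom, div_div_eq_mul_div, mul_comm]

lemma Phi1_denom_pos (u : ℝ) {z : ℝ} (hz : z ≤ 1) : 0 < 1 + xu u - (1 - xu u) * z := by
  nlinarith [xu_pos u, xu_le_one u]

lemma Phi1_sub_self (u : ℝ) {z : ℝ} (hz : z ≤ 1) :
    Phi1 u z - z =
      (1 - z) * (2 * xu u - (1 - xu u) * z) / (1 + xu u - (1 - xu u) * z) := by
  rw [Phi1_eq, eq_div_iff (Phi1_denom_pos u hz).ne', sub_mul,
    div_mul_cancel₀ _ (Phi1_denom_pos u hz).ne']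
  ring

theorem stmt_15 (u : ℝ) (hu : Real.sqrt 3 < u) :
    ∃ z₁ ∈ Set.Ioo (0 : ℝ) 1, Phi1 u z₁ = z₁ ∧
      (∀ z ∈ Set.Ioo (0 : ℝ) z₁, z < Phi1 u z) ∧
      (∀ z ∈ Set.Ioo z₁ (1 : ℝ), Phi1 u z < z) := by
  set x := xu u
  have hx0 : 0 < x := xu_pos u
  have hx3 : x < 1 / 3 := xu_lt_one_third hu
  have h1x : 0 < 1 - x := by linarith
  set z₁ := 2 * x / (1 - x)
  have hfactor (z : ℝ) : 2 * x - (1 - x) * z = (1 - x) * (z₁ - z) := by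
    rw [mul_sub, mul_div_cancel₀ _ h1x.ne']
  have hz₁1 : z₁ < 1 := by rw [div_lt_one h1x]; linarith
  refine ⟨z₁, ⟨by positivity, hz₁1⟩, ?_, ?_, ?_⟩
  · rw [← sub_eq_zero, Phi1_sub_self u hz₁1.le, hfactor, sub_self, mul_zero, mul_zero,
      zero_div]
  · rintro z ⟨hz0, hzz₁⟩
    have hz1 : z ≤ 1 := by linarith
    rw [← sub_pos, Phi1_sub_self u hz1, hfactor]
    exact div_pos (mul_pos (by linarith) (mul_pos h1x (by linarith)))
      (Phi1_denom_pos u hz1)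
  · rintro z ⟨hz₁z, hz1⟩
    rw [← sub_neg, Phi1_sub_self u hz1.le, hfactor]
    exact div_neg_of_neg_of_pos (mul_neg_of_pos_of_neg (by linarith)
      (mul_neg_of_pos_of_neg h1x (by linarith))) (Phi1_denom_pos u hz1.le)
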